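/- arXiv:1311.2993 — 2 statements merged into one kernel-verified Lean document; each statement's English description precedes it below -/
import Mathlib

section
/- Let B be a finite set, M a right-angled Coxeter matrix on B, and W the associated Coxeter group with generators (r_b)_{b ∈ B}. Let φ : W → F_2 be the group homomorphism with φ(r_b) = 1 for all b ∈ B (F_2 viewed as the additive group of order 2). Let V be a finite-dimensional F_2-vector space of dimension s, (λ_b)_{b ∈ B} a family of vectors spanning V, and λ : W → V the group homomorphism with λ(r_b) = λ_b for all b. Then ker λ ⊆ ker φ if and only if there exists an F_2-linear isomorphism e : V ≃ F_2^s such that for every b ∈ B the vector e(λ_b) has odd weight. -/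
/-!
Since the `λ_b` span `V`, `λ` is onto, so `ker λ ⊆ ker φ` says exactly that `φ = f ∘ λ` for a
linear form `f : V → F₂`, i.e. one with `f (λ_b) = 1` for every `b`. A vector of `F₂^s` has odd
weight iff its coordinate sum is `1`, so it remains to see that every nonzero linear form is the
coordinate sum in suitable coordinates: in a basis `(v_i)`, pick `v_j` with `f v_j = 1`; with `σ`
the coordinate sum, the transvection `A x = x + (f x - σ x) • v_j` satisfies `σ ∘ A = f`.
-/

def OddWeight {s : ℕ} (w : Fin s → ZMod 2) : Prop :=
  Odd (Finset.univ.filter fun i => w i = 1).card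

theorem oddWeight_iff_sum_eq_one {s : ℕ} (w : Fin s → ZMod 2) :
    OddWeight w ↔ ∑ i, w i = 1 := by
  have hw : ∀ i, w i = if w i = 1 then 1 else 0 := fun i => by
    generalize w i = x; revert x; decide
  rw [OddWeight, ← ZMod.natCast_eq_one_iff_odd, Finset.sum_congr rfl fun i _ => hw i,
    Finset.sum_boole]

theorem Module.Dual.exists_linearEquiv_comp_eq {R V : Type*} [CommRing R] [AddCommGroup V]
    [Module R V] {f g : Module.Dual R V} {w : V} (hf : f w = 1) (hg : g w = 1) :
    ∃ A : V ≃ₗ[R] V, ∀ v, g (A v) = f v := by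
  have hw : (f - g) w = 0 := by simp [hf, hg]
  refine ⟨LinearEquiv.transvection hw, fun v => ?_⟩
  simp only [LinearEquiv.transvection.apply, map_add, map_smul, hg, LinearMap.sub_apply,
    smul_eq_mul, mul_one, add_sub_cancel]

theorem Module.Dual.exists_linearEquiv_sum_apply_eq {V : Type*} [AddCommGroup V]
    [Module (ZMod 2) V] [FiniteDimensional (ZMod 2) V] {s : ℕ}
    (hs : Module.finrank (ZMod 2) V = s) {f : Module.Dual (ZMod 2) V} (hf : f ≠ 0) :
    ∃ e : V ≃ₗ[ZMod 2] (Fin s → ZMod 2), ∀ v, ∑ i, e v i = f v := by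
  let b := (Module.finBasis (ZMod 2) V).reindex (finCongr hs)
  obtain ⟨i, hi⟩ : ∃ i, f (b i) ≠ 0 := by
    by_contra! h
    exact hf (b.ext fun i => by simpa using h i)
  let σ : Module.Dual (ZMod 2) V := ∑ j, b.coord j
  have hσ : ∀ v, σ v = ∑ j, b.equivFun v j := fun v => by simp [σ]
  obtain ⟨A, hA⟩ :=
    exists_linearEquiv_comp_eq (g := σ) (Fin.eq_one_of_ne_zero _ hi) (by simp [hσ])
  exact ⟨A.trans b.equivFun, fun v => (hσ (A v)).symm.trans (hA v)⟩

theorem exists_dual_apply_eq_one_iff_exists_oddWeight {B V : Type*} [AddCommGroup V]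
    [Module (ZMod 2) V] [FiniteDimensional (ZMod 2) V] {s : ℕ}
    (hs : Module.finrank (ZMod 2) V = s) (lam : B → V) :
    (∃ f : Module.Dual (ZMod 2) V, ∀ b, f (lam b) = 1) ↔
      ∃ e : V ≃ₗ[ZMod 2] (Fin s → ZMod 2), ∀ b, OddWeight (e (lam b)) := by
  simp only [oddWeight_iff_sum_eq_one]
  constructor
  · rintro ⟨f, hf⟩
    by_cases hf0 : f = 0
    · have : IsEmpty B := ⟨fun b => by simpa [hf0] using hf b⟩
      exact ⟨LinearEquiv.ofFinrankEq _ _ (by simp [hs]), isEmptyElim⟩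
    obtain ⟨e, he⟩ := Module.Dual.exists_linearEquiv_sum_apply_eq hs hf0
    exact ⟨e, fun b => (he _).trans (hf b)⟩
  · rintro ⟨e, he⟩
    exact ⟨(∑ i, LinearMap.proj i).comp e.toLinearMap, fun b => by simpa using he b⟩

theorem MonoidHom.surjective_of_span_eq_top {n : ℕ} {ι W V : Type*} [Group W] [AddCommGroup V]
    [Module (ZMod n) V] (l : W →* Multiplicative V) {v : ι → V}
    (hv : ∀ i, Multiplicative.ofAdd (v i) ∈ l.range)
    (hspan : Submodule.span (ZMod n) (Set.range v) = ⊤) : Function.Surjective l := by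
  let L := AddSubgroup.toZModSubmodule n (MonoidHom.toAdditiveLeft l).range
  have hL : Submodule.span (ZMod n) (Set.range v) ≤ L :=
    Submodule.span_le.mpr (Set.range_subset_iff.mpr hv)
  intro x
  obtain ⟨w, hw⟩ := hL (hspan ▸ Submodule.mem_top : x.toAdd ∈ _)
  exact ⟨w.toMul, congrArg Multiplicative.ofAdd hw⟩

theorem MonoidHom.ker_le_ker_iff_exists_linearMap {n : ℕ} {W V U : Type*} [Group W]
    [AddCommGroup V] [Module (ZMod n) V] [AddCommGroup U] [Module (ZMod n) U]
    {l : W →* Multiplicative V} (hl : Function.Surjective l) (phi : W →* Multiplicative U) :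
    l.ker ≤ phi.ker ↔
      ∃ f : V →ₗ[ZMod n] U, phi = (AddMonoidHom.toMultiplicative f.toAddMonoidHom).comp l := by
  constructor
  · intro h
    let ψ := l.liftOfSurjective hl ⟨phi, h⟩
    refine ⟨(AddMonoidHom.toMultiplicative.symm ψ).toZModLinearMap n, ?_⟩
    ext w
    simp [ψ]
  · rintro ⟨f, rfl⟩
    rw [← MonoidHom.comap_ker]
    exact l.ker_le_comap _

theorem coxeter_colouring_orientability_general
    {B : Type*} (M : CoxeterMatrix B)
    {W : Type*} [Group W] (cs : CoxeterSystem M W)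
    (phi : W →* Multiplicative (ZMod 2))
    (hphi : ∀ b : B, phi (cs.simple b) = Multiplicative.ofAdd (1 : ZMod 2))
    (V : Type*) [AddCommGroup V] [Module (ZMod 2) V]
    [FiniteDimensional (ZMod 2) V] (s : ℕ)
    (hs : Module.finrank (ZMod 2) V = s)
    (lam : B → V)
    (hspan : Submodule.span (ZMod 2) (Set.range lam) = ⊤)
    (l : W →* Multiplicative V)
    (hl : ∀ b : B, l (cs.simple b) = Multiplicative.ofAdd (lam b)) :
    l.ker ≤ phi.ker ↔
      ∃ e : V ≃ₗ[ZMod 2] (Fin s → ZMod 2), ∀ b : B, OddWeight (e (lam b)) := by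
  have hsurj : Function.Surjective l :=
    l.surjective_of_span_eq_top (fun b => ⟨cs.simple b, hl b⟩) hspan
  rw [l.ker_le_ker_iff_exists_linearMap (n := 2) hsurj,
    ← exists_dual_apply_eq_one_iff_exists_oddWeight hs]
  refine exists_congr fun f => ⟨fun h b => ?_, fun h => cs.ext_simple fun b => ?_⟩
  · simpa [hphi, hl] using (DFunLike.congr_fun h (cs.simple b)).symm
  · simp [hphi, hl, h b]

/-- Let `B` be a finite set, `M` a right-angled Coxeter matrix on `B`,
`W` the associated Coxeter group with simple generators `cs.simple b`. Let
`phi : W →* Multiplicative (ZMod 2)` be the homomorphism sending every simple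
generator to `1 ∈ F₂`. Let `V` be a finite-dimensional `F₂`-vector space of
dimension `s`, `lam : B → V` a family of vectors spanning `V`, and
`l : W →* Multiplicative V` the homomorphism with `l (cs.simple b) = lam b` for
all `b`. Then `ker l ⊆ ker phi` iff there exists an `F₂`-linear isomorphism
`e : V ≃ₗ F₂^s` such that `e (lam b)` has odd weight for every `b`. -/
theorem coxeter_colouring_orientability
    {B : Type*} [Finite B] (M : CoxeterMatrix B)
    (hM : ∀ b b' : B, b ≠ b' → M b b' = 2 ∨ M b b' = 0)
    {W : Type*} [Group W] (cs : CoxeterSystem M W)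
    (phi : W →* Multiplicative (ZMod 2))
    (hphi : ∀ b : B, phi (cs.simple b) = Multiplicative.ofAdd (1 : ZMod 2))
    (V : Type*) [AddCommGroup V] [Module (ZMod 2) V]
    [FiniteDimensional (ZMod 2) V] (s : ℕ)
    (hs : Module.finrank (ZMod 2) V = s)
    (lam : B → V)
    (hspan : Submodule.span (ZMod 2) (Set.range lam) = ⊤)
    (l : W →* Multiplicative V)
    (hl : ∀ b : B, l (cs.simple b) = Multiplicative.ofAdd (lam b)) :
    l.ker ≤ phi.ker ↔
      ∃ e : V ≃ₗ[ZMod 2] (Fin s → ZMod 2), ∀ b : B, OddWeight (e (lam b)) :=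
  coxeter_colouring_orientability_general M cs phi hphi V s hs lam hspan l hl
end

section
/- Let G and H be groups and f : G → H a surjective group homomorphism whose kernel equals {1, r} for some element r ∈ G of order 2. Let V be an F_2-vector space (viewed as an abelian group in which every element has order at most 2), let λ : G → V be a group homomorphism with λ(r) ≠ 0, let W = V / span_{F_2}{λ(r)} with quotient map π : V → W, and let μ : H → W be a group homomorphism satisfying μ ∘ f = π ∘ λ. Then f restricts to a group isomorphism from ker λ onto ker μ. -/
/-!
As `ker f ⊓ ker λ` is trivial, `f` is injective on `ker λ`. Over `ZMod n` the span of `λ r` is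
`λ(⟨r⟩)`, so `ker μ = f (λ⁻¹ (λ ⟨r⟩)) = f (ker λ ⊔ ⟨r⟩) = f (ker λ)`, using `r ∈ ker f`.
-/

open Subgroup

section

variable {G H : Type*} [Group G] [Group H]

theorem MonoidHom.subgroupMap_injective_of_disjoint {f : G →* H} {K : Subgroup G}
    (h : Disjoint f.ker K) : Function.Injective (f.subgroupMap K) :=
  (injective_iff_map_eq_one _).2 fun x hx =>
    Subtype.ext <| (disjoint_def.1 h) (congrArg Subtype.val hx) x.2

theorem MonoidHom.disjoint_ker_of_coe_ker_eq_pair {M : Type*} [Group M] {f : G →* H}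
    {l : G →* M} {r : G} (hker : (f.ker : Set G) = {1, r}) (hlr : l r ≠ 1) :
    Disjoint f.ker l.ker := by
  refine disjoint_def.2 fun {x} hxf hxl => ?_
  rcases (hker ▸ hxf : x ∈ ({1, r} : Set G)) with rfl | rfl
  · rfl
  · exact absurd hxl hlr

theorem ZMod.mem_span_singleton_iff_exists_zsmul {n : ℕ} {V : Type*} [AddCommGroup V]
    [Module (ZMod n) V] {x v : V} :
    x ∈ Submodule.span (ZMod n) {v} ↔ ∃ k : ℤ, k • v = x := by
  rw [Submodule.mem_span_singleton]
  constructor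
  · rintro ⟨c, rfl⟩
    exact ⟨c.cast, by rw [← Int.cast_smul_eq_zsmul (ZMod n), ZMod.intCast_zmod_cast]⟩
  · rintro ⟨k, rfl⟩
    exact ⟨k, Int.cast_smul_eq_zsmul (ZMod n) k v⟩

theorem MonoidHom.map_ker_eq_ker_of_comp_eq_mkQ_comp {n : ℕ} {V : Type*} [AddCommGroup V]
    [Module (ZMod n) V] {f : G →* H} (hf : Function.Surjective f) {r : G} (hr : f r = 1)
    (l : G →* Multiplicative V)
    (m : H →* Multiplicative (V ⧸ Submodule.span (ZMod n) {Multiplicative.toAdd (l r)}))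
    (hm : ∀ g : G, m (f g) = Multiplicative.ofAdd
      ((Submodule.span (ZMod n) {Multiplicative.toAdd (l r)}).mkQ
        (Multiplicative.toAdd (l g)))) :
    l.ker.map f = m.ker := by
  ext h
  constructor
  · rintro ⟨g, hg, rfl⟩
    rw [mem_ker, hm, mem_ker.1 hg]
    rfl
  · intro hh
    obtain ⟨g, rfl⟩ := hf h
    have hspan : Multiplicative.toAdd (l g) ∈
        Submodule.span (ZMod n) {Multiplicative.toAdd (l r)} := by
      rw [← Submodule.Quotient.mk_eq_zero, ← Submodule.mkQ_apply]
      exact Multiplicative.ofAdd.injective ((hm g).symm.trans hh)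
    obtain ⟨k, hk⟩ := ZMod.mem_span_singleton_iff_exists_zsmul.1 hspan
    -- `l g = l r ^ k`, so `g * (r ^ k)⁻¹` lies in `ker l` and has the same image as `g`
    refine ⟨g * (r ^ k)⁻¹, ?_, by simp [hr]⟩
    rw [SetLike.mem_coe, mem_ker, map_mul, map_inv, map_zpow, mul_inv_eq_one]
    exact Multiplicative.toAdd.injective hk.symm

end

theorem restriction_to_kernels_isomorphism_general
    {G H : Type*} [Group G] [Group H] (f : G →* H)
    (hf : Function.Surjective f)
    (r : G)
    (hker : (f.ker : Set G) = {1, r})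
    (V : Type*) [AddCommGroup V] [Module (ZMod 2) V]
    (l : G →* Multiplicative V)
    (hlr : l r ≠ 1)
    (m : H →* Multiplicative
      (V ⧸ Submodule.span (ZMod 2) {Multiplicative.toAdd (l r)}))
    (hm : ∀ g : G, m (f g) = Multiplicative.ofAdd
      ((Submodule.span (ZMod 2) {Multiplicative.toAdd (l r)}).mkQ
        (Multiplicative.toAdd (l g)))) :
    ∃ e : l.ker ≃* m.ker, ∀ x : l.ker, (e x : H) = f (x : G) := by
  have hr : f r = 1 := show r ∈ (f.ker : Set G) from hker ▸ Or.inr rfl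
  let e := MulEquiv.ofBijective (f.subgroupMap l.ker)
    ⟨MonoidHom.subgroupMap_injective_of_disjoint
      (MonoidHom.disjoint_ker_of_coe_ker_eq_pair hker hlr), f.subgroupMap_surjective l.ker⟩
  exact ⟨e.trans (MulEquiv.subgroupCongr
    (MonoidHom.map_ker_eq_ker_of_comp_eq_mkQ_comp hf hr l m hm)), fun _ => rfl⟩

/-- Let `G`, `H` be groups and `f : G →* H` a surjective homomorphism
whose kernel equals `{1, r}` for an element `r` of order `2`. Let `V` be an
`F₂`-vector space (viewed multiplicatively as an abelian group of exponent `2`),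
`l : G →* Multiplicative V` a homomorphism with `l r ≠ 1` (i.e. `λ(r) ≠ 0`),
`W = V / span {λ(r)}` with quotient map `π`, and `m : H →* Multiplicative W`
a homomorphism with `m ∘ f = π ∘ l`. Then `f` restricts to a group isomorphism
from `ker l` onto `ker m`. -/
theorem restriction_to_kernels_isomorphism
    {G H : Type*} [Group G] [Group H] (f : G →* H)
    (hf : Function.Surjective f)
    (r : G) (hr : orderOf r = 2)
    (hker : (f.ker : Set G) = {1, r})
    (V : Type*) [AddCommGroup V] [Module (ZMod 2) V]
    (l : G →* Multiplicative V)
    (hlr : l r ≠ 1)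
    (m : H →* Multiplicative
      (V ⧸ Submodule.span (ZMod 2) {Multiplicative.toAdd (l r)}))
    (hm : ∀ g : G, m (f g) = Multiplicative.ofAdd
      ((Submodule.span (ZMod 2) {Multiplicative.toAdd (l r)}).mkQ
        (Multiplicative.toAdd (l g)))) :
    ∃ e : l.ker ≃* m.ker, ∀ x : l.ker, (e x : H) = f (x : G) :=
  restriction_to_kernels_isomorphism_general f hf r hker V l hlr m hm
end
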